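/- Let ρ, σ be density matrices on ℂ^d with spectral decompositions ρ = ∑_x λ_x P_x and σ = ∑_y μ_y Q_y as above, and L > 0. Define T_L as the orthogonal projection onto the support of ∑_{x,y : λ_x ≥ L μ_y} Q_y P_x Q_y. Then Tr(T_L ρ) ≥ ∑_{x,y : λ_x ≥ L μ_y} λ_x Tr(P_x Q_y). -/

import Mathlib

open Matrix
open scoped ComplexOrder

/-! Each `Q_y` commutes with `S = ∑_{λ_x ≥ L μ_y} Q_y P_x Q_y`, hence with the projection `T` onto
its range. So pinching by the `Q_y` gives `tr (T ρ) = ∑_{x,y} λ_x tr (T Q_y P_x Q_y)`, a sum of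
nonnegative terms. Since `T` fixes the positive semidefinite sum `S`, it preserves the trace of each
of its summands, and those terms equal `λ_x tr (P_x Q_y)`. -/

/-- The operator `∑_{x,y : λ_x ≥ L μ_y} Q_y P_x Q_y`. -/
noncomputable def opS {d : ℕ} {ι κ : Type*} [Fintype ι] [Fintype κ]
    (lam : ι → ℝ) (mu : κ → ℝ)
    (P : ι → Matrix (Fin d) (Fin d) ℂ) (Q : κ → Matrix (Fin d) (Fin d) ℂ)
    (L : ℝ) : Matrix (Fin d) (Fin d) ℂ :=
  ∑ p ∈ Finset.univ.filter (fun p : ι × κ => L * mu p.2 ≤ lam p.1),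
    Q p.2 * P p.1 * Q p.2

namespace Matrix

variable {n α 𝕜 : Type*} [Fintype n] [RCLike 𝕜]

lemma PosSemidef.of_isStarProjection {T : Matrix n n 𝕜} (hT : IsStarProjection T) :
    T.PosSemidef := by
  simpa only [← star_eq_conjTranspose, hT.isSelfAdjoint.star_eq, hT.isIdempotentElem.eq]
    using posSemidef_conjTranspose_mul_self T

lemma PosSemidef.mul_mul_self_of_isHermitian {A B : Matrix n n 𝕜} (hA : A.PosSemidef)
    (hB : B.IsHermitian) : (B * A * B).PosSemidef := by
  simpa only [hB.eq] using hA.mul_mul_conjTranspose_same B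

lemma trace_mul_nonneg_of_isStarProjection {T B : Matrix n n 𝕜} (hT : IsStarProjection T)
    (hB : B.PosSemidef) : 0 ≤ (T * B).trace := by
  have hcyc : (T * B).trace = (T * B * T).trace := by
    rw [trace_mul_comm (T * B), ← mul_assoc, hT.isIdempotentElem.eq]
  exact hcyc ▸ (hB.mul_mul_self_of_isHermitian hT.isSelfAdjoint).trace_nonneg

lemma mul_eq_right_of_range_le {T S : Matrix n n 𝕜} (hT : IsIdempotentElem T)
    (h : LinearMap.range S.mulVecLin ≤ LinearMap.range T.mulVecLin) : T * S = S := by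
  refine ext_iff_mulVec.2 fun v => ?_
  obtain ⟨w, hw⟩ := h ⟨v, rfl⟩
  simp only [mulVecLin_apply] at hw
  rw [← mulVec_mulVec, ← hw, mulVec_mulVec, hT.eq]

/-- `M` leaves the range of `S`, which is that of `T`, invariant; self-adjointness of `M` and `T`
turns this into commutation. -/
lemma commute_of_isStarProjection_of_range_eq {T S M : Matrix n n 𝕜} (hT : IsStarProjection T)
    (hM : M.IsHermitian) (hMS : Commute M S)
    (hTS : LinearMap.range T.mulVecLin = LinearMap.range S.mulVecLin) : Commute T M := by
  have hinv : T * (M * T) = M * T := by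
    refine mul_eq_right_of_range_le hT.isIdempotentElem ?_
    rintro _ ⟨v, rfl⟩
    obtain ⟨w, hw⟩ : T *ᵥ v ∈ LinearMap.range S.mulVecLin := hTS ▸ ⟨v, rfl⟩
    rw [hTS]
    refine ⟨M *ᵥ w, ?_⟩
    simp only [mulVecLin_apply] at hw ⊢
    rw [← mulVec_mulVec, ← hw, mulVec_mulVec, mulVec_mulVec, hMS.eq]
  have hTh : Tᴴ = T := hT.isSelfAdjoint
  have hstar := congrArg conjTranspose hinv
  simp only [conjTranspose_mul, hTh, hM.eq, ← mul_assoc] at hstar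
  rw [← mul_assoc] at hinv
  exact hstar.symm.trans hinv

lemma commute_mul_mul_of_orthogonal {κ : Type*} {Q : κ → Matrix n n 𝕜}
    (hQo : ∀ y y', y ≠ y' → Q y * Q y' = 0) (hQi : ∀ y, IsIdempotentElem (Q y))
    (A : Matrix n n 𝕜) (y y' : κ) : Commute (Q y) (Q y' * A * Q y') := by
  obtain rfl | hne := eq_or_ne y y'
  · rw [Commute, SemiconjBy, ← mul_assoc, ← mul_assoc, (hQi y).eq, mul_assoc _ (Q y), (hQi y).eq]
  · rw [Commute, SemiconjBy, ← mul_assoc, ← mul_assoc, hQo y y' hne, mul_assoc _ (Q y'),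
      hQo y' y hne.symm]
    simp

lemma trace_mul_eq_sum_trace_mul_pinch {κ : Type*} [Fintype κ] [DecidableEq n]
    {Q : κ → Matrix n n 𝕜} (hQi : ∀ y, IsIdempotentElem (Q y)) (hQsum : ∑ y, Q y = 1)
    {T : Matrix n n 𝕜} (hTQ : ∀ y, Commute T (Q y)) (A : Matrix n n 𝕜) :
    (T * A).trace = ∑ y, (T * (Q y * A * Q y)).trace := by
  have hterm : ∀ y, (T * (Q y * A * Q y)).trace = (T * (Q y * A)).trace := fun y => by
    rw [← mul_assoc, trace_mul_comm, ← mul_assoc, ← mul_assoc, ← (hTQ y).eq, mul_assoc T,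
      (hQi y).eq, mul_assoc]
  simp only [hterm, ← trace_sum, ← Finset.mul_sum, ← Finset.sum_mul, hQsum, one_mul]

/-- The traces of the `(1 - T) * B a` are nonnegative and add up to zero. -/
lemma trace_mul_eq_of_isStarProjection_of_mul_sum_eq [DecidableEq n] {T : Matrix n n 𝕜}
    (hT : IsStarProjection T) {s : Finset α} {B : α → Matrix n n 𝕜}
    (hB : ∀ a ∈ s, (B a).PosSemidef) (hTB : T * ∑ a ∈ s, B a = ∑ a ∈ s, B a)
    {a : α} (ha : a ∈ s) : (T * B a).trace = (B a).trace := by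
  have hsum : ∑ a ∈ s, ((1 - T) * B a).trace = 0 := by
    rw [← trace_sum, ← Finset.mul_sum, sub_mul, one_mul, hTB, sub_self, trace_zero]
  have hzero := (Finset.sum_eq_zero_iff_of_nonneg fun a ha =>
    trace_mul_nonneg_of_isStarProjection hT.one_sub (hB a ha)).1 hsum a ha
  rw [sub_mul, one_mul, trace_sub, sub_eq_zero] at hzero
  exact hzero.symm

end Matrix

theorem stmt13 {d : ℕ} {ι κ : Type*} [Fintype ι] [Fintype κ]
    (ρ : Matrix (Fin d) (Fin d) ℂ)
    (lam : ι → ℝ) (mu : κ → ℝ) (hlam : ∀ x, 0 ≤ lam x)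
    (P : ι → Matrix (Fin d) (Fin d) ℂ) (Q : κ → Matrix (Fin d) (Fin d) ℂ)
    (hPh : ∀ x, (P x).IsHermitian) (hQh : ∀ y, (Q y).IsHermitian)
    (hQo : ∀ y y', y ≠ y' → Q y * Q y' = 0)
    (hPi : ∀ x, P x * P x = P x) (hQi : ∀ y, Q y * Q y = Q y)
    (hQsum : ∑ y, Q y = 1)
    (hρP : ρ = ∑ x, (lam x : ℂ) • P x)
    (L : ℝ)
    (T : Matrix (Fin d) (Fin d) ℂ)
    (hTh : T.IsHermitian) (hTi : T * T = T)
    (hTrange : LinearMap.range T.mulVecLin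
      = LinearMap.range (opS lam mu P Q L).mulVecLin) :
    ((T * ρ).trace).re
      ≥ ∑ p ∈ Finset.univ.filter (fun p : ι × κ => L * mu p.2 ≤ lam p.1),
          lam p.1 * ((P p.1 * Q p.2).trace).re := by
  set F := Finset.univ.filter (fun p : ι × κ => L * mu p.2 ≤ lam p.1)
  set B : ι × κ → Matrix (Fin d) (Fin d) ℂ := fun p => Q p.2 * P p.1 * Q p.2
  have hT : IsStarProjection T := ⟨hTi, hTh⟩
  have hB : ∀ p, (B p).PosSemidef := fun p =>
    (PosSemidef.of_isStarProjection ⟨hPi p.1, hPh p.1⟩).mul_mul_self_of_isHermitian (hQh p.2)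
  have hTQ : ∀ y, Commute T (Q y) := fun y =>
    commute_of_isStarProjection_of_range_eq hT (hQh y)
      (Commute.sum_right _ _ _ fun p _ => commute_mul_mul_of_orthogonal hQo hQi _ y p.2) hTrange
  have hTS : T * ∑ p ∈ F, B p = ∑ p ∈ F, B p := mul_eq_right_of_range_le hTi hTrange.ge
  have hTρ : (T * ρ).trace = ∑ p : ι × κ, (lam p.1 : ℂ) * (T * B p).trace := by
    rw [hρP, Finset.mul_sum, trace_sum, Fintype.sum_prod_type]
    refine Finset.sum_congr rfl fun x _ => ?_
    rw [mul_smul_comm, trace_smul, smul_eq_mul,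
      trace_mul_eq_sum_trace_mul_pinch hQi hQsum hTQ, Finset.mul_sum]
  have hmain : ∑ p ∈ F, (lam p.1 : ℂ) * (P p.1 * Q p.2).trace ≤ (T * ρ).trace := calc
    _ = ∑ p ∈ F, (lam p.1 : ℂ) * (T * B p).trace := Finset.sum_congr rfl fun p hp => by
        rw [trace_mul_eq_of_isStarProjection_of_mul_sum_eq hT (fun p _ => hB p) hTS hp,
          trace_mul_cycle, hQi p.2, trace_mul_comm]
    _ ≤ ∑ p, (lam p.1 : ℂ) * (T * B p).trace :=
        Finset.sum_le_sum_of_subset_of_nonneg (Finset.subset_univ F) fun p _ _ =>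
          mul_nonneg (by exact_mod_cast hlam p.1) (trace_mul_nonneg_of_isStarProjection hT (hB p))
    _ = (T * ρ).trace := hTρ.symm
  simpa only [ge_iff_le, Complex.re_sum, Complex.re_ofReal_mul] using (Complex.le_def.1 hmain).1
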